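/- Let R be a ring and M a right R-module of type FP_{n+1} for some n ≥ 1. Then the multiplication map M ⊗_R ∏_I R → ∏_I M sending m ⊗ (r_i)_{i∈I} to (m r_i)_{i∈I} is an isomorphism of abelian groups for any index set I. -/

import Mathlib

noncomputable section
open Function MulOpposite

/-- `IsFP S n M`: the `S`-module `M` is of type `FPₙ`. -/
def IsFP (S : Type) [Ring S] : ℕ → ModuleCat.{0} S → Prop
  | 0, M => Module.Finite S M
  | n+1, M => ∃ (d : ℕ) (φ : (Fin d → S) →ₗ[S] M), Function.Surjective φ ∧
      IsFP S n (ModuleCat.of S (LinearMap.ker φ))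

/-- Unbundled version of `IsFP`. -/
def IsFPMod (S : Type) [Ring S] (n : ℕ) (M : Type) [AddCommGroup M] [Module S M] : Prop :=
  IsFP S n (ModuleCat.of S M)

section RTensor

variable (R : Type) [Ring R] (M : Type) [AddCommGroup M] [Module Rᵐᵒᵖ M]
  (N : Type) [AddCommGroup N] [Module R N]

/-- The balancing relations for the tensor product of a right `R`-module `M`
(i.e. a left `Rᵐᵒᵖ`-module) and a left `R`-module `N`. -/
def RTensor.rel : AddSubgroup (TensorProduct ℤ M N) :=
  AddSubgroup.closure {x | ∃ (r : R) (m : M) (n : N),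
    x = ((op r • m) ⊗ₜ[ℤ] n) - (m ⊗ₜ[ℤ] (r • n))}

/-- The balanced tensor product `M ⊗_R N` of a right `R`-module and a left `R`-module,
as an abelian group. -/
def RTensor : Type := TensorProduct ℤ M N ⧸ RTensor.rel R M N

instance : AddCommGroup (RTensor R M N) :=
  inferInstanceAs (AddCommGroup (TensorProduct ℤ M N ⧸ RTensor.rel R M N))

/-- The canonical projection. -/
def RTensor.mk : TensorProduct ℤ M N →+ RTensor R M N :=
  QuotientAddGroup.mk' (RTensor.rel R M N)

/-- Elementary tensors in `RTensor`. -/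
def RTensor.tmul (m : M) (n : N) : RTensor R M N := RTensor.mk R M N (m ⊗ₜ[ℤ] n)

theorem RTensor.tmul_balanced (r : R) (m : M) (n : N) :
    RTensor.tmul R M N (op r • m) n = RTensor.tmul R M N m (r • n) := by
  refine (QuotientAddGroup.mk'_eq_mk' _).2 ⟨(m ⊗ₜ[ℤ] (r • n)) - ((op r • m) ⊗ₜ[ℤ] n), ?_, by abel⟩
  have h : ((op r • m) ⊗ₜ[ℤ] n) - (m ⊗ₜ[ℤ] (r • n)) ∈ RTensor.rel R M N :=
    AddSubgroup.subset_closure ⟨r, m, n, rfl⟩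
  simpa [neg_sub] using AddSubgroup.neg_mem _ h

theorem RTensor.tmul_add (m : M) (n n' : N) :
    RTensor.tmul R M N m (n + n') = RTensor.tmul R M N m n + RTensor.tmul R M N m n' := by
  rw [RTensor.tmul, TensorProduct.tmul_add, map_add]; rfl

theorem RTensor.add_tmul (m m' : M) (n : N) :
    RTensor.tmul R M N (m + m') n = RTensor.tmul R M N m n + RTensor.tmul R M N m' n := by
  rw [RTensor.tmul, TensorProduct.add_tmul, map_add]; rfl

theorem RTensor.tmul_zero (m : M) : RTensor.tmul R M N m 0 = 0 := by
  rw [RTensor.tmul, TensorProduct.tmul_zero, map_zero]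

theorem RTensor.zero_tmul (n : N) : RTensor.tmul R M N (0 : M) n = 0 := by
  rw [RTensor.tmul, TensorProduct.zero_tmul, map_zero]

variable {R M N}

/-- Lifting a balanced biadditive map to the balanced tensor product. -/
def RTensor.lift {A : Type} [AddCommGroup A] (f : M →+ N →+ A)
    (hf : ∀ (r : R) (m : M) (n : N), f (op r • m) n = f m (r • n)) :
    RTensor R M N →+ A := by
  refine QuotientAddGroup.lift (RTensor.rel R M N)
    (TensorProduct.lift (LinearMap.mk₂ ℤ (fun m n => f m n)
      (by intro m₁ m₂ n; simp)
      (by intro z m n; simp)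
      (by intro m n₁ n₂; simp)
      (by intro z m n; simp))).toAddMonoidHom ?_
  refine (AddSubgroup.closure_le _).2 ?_
  rintro x ⟨r, m, n, rfl⟩
  simp [hf r m n]

@[simp] theorem RTensor.lift_tmul {A : Type} [AddCommGroup A] (f : M →+ N →+ A)
    (hf : ∀ (r : R) (m : M) (n : N), f (op r • m) n = f m (r • n)) (m : M) (n : N) :
    RTensor.lift f hf (RTensor.tmul R M N m n) = f m n := by
  show QuotientAddGroup.lift _ _ _ (QuotientAddGroup.mk (m ⊗ₜ[ℤ] n)) = _
  erw [QuotientAddGroup.lift_mk]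

end RTensor

section Maps

variable (R : Type) [Ring R] (M : Type) [AddCommGroup M] [Module Rᵐᵒᵖ M]
  {N N' : Type} [AddCommGroup N] [Module R N] [AddCommGroup N'] [Module R N']

/-- Functoriality of the balanced tensor product in the left-module variable. -/
def RTensor.mapRight (g : N →ₗ[R] N') : RTensor R M N →+ RTensor R M N' :=
  RTensor.lift
    { toFun := fun m =>
        { toFun := fun n => RTensor.tmul R M N' m (g n)
          map_zero' := by
            show RTensor.tmul R M N' m (g 0) = 0
            rw [map_zero]; exact RTensor.tmul_zero R M N' m
          map_add' := by
            intro n n'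
            show RTensor.tmul R M N' m (g (n + n')) = _
            rw [map_add]; exact RTensor.tmul_add R M N' m _ _ }
      map_zero' := by
        ext n
        show RTensor.tmul R M N' 0 (g n) = 0
        exact RTensor.zero_tmul R M N' _
      map_add' := by
        intro m m'
        ext n
        show RTensor.tmul R M N' (m + m') (g n) = _
        exact RTensor.add_tmul R M N' m m' _ }
    (by
      intro r m n
      show RTensor.tmul R M N' (op r • m) (g n) = RTensor.tmul R M N' m (g (r • n))
      rw [map_smul]
      exact RTensor.tmul_balanced R M N' r m (g n))

end Maps

section MapLeft

variable (R : Type) [Ring R] {M M' : Type} [AddCommGroup M] [Module Rᵐᵒᵖ M]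
  [AddCommGroup M'] [Module Rᵐᵒᵖ M'] (N : Type) [AddCommGroup N] [Module R N]

/-- Functoriality of the balanced tensor product in the right-module variable. -/
def RTensor.mapLeft (g : M →ₗ[Rᵐᵒᵖ] M') : RTensor R M N →+ RTensor R M' N :=
  RTensor.lift
    { toFun := fun m =>
        { toFun := fun n => RTensor.tmul R M' N (g m) n
          map_zero' := RTensor.tmul_zero R M' N _
          map_add' := fun n n' => RTensor.tmul_add R M' N _ n n' }
      map_zero' := by
        ext n
        show RTensor.tmul R M' N (g 0) n = 0
        rw [map_zero]; exact RTensor.zero_tmul R M' N n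
      map_add' := by
        intro m m'
        ext n
        show RTensor.tmul R M' N (g (m + m')) n = _
        rw [map_add]; exact RTensor.add_tmul R M' N _ _ n }
    (by
      intro r m n
      show RTensor.tmul R M' N (g (op r • m)) n = RTensor.tmul R M' N (g m) (r • n)
      rw [map_smul]
      exact RTensor.tmul_balanced R M' N r (g m) n)

end MapLeft

section Resolutions

variable (S : Type) [Ring S] (N : Type) [AddCommGroup N] [Module S N]

/-- A free resolution `⋯ → F₂ → F₁ → F₀ → N → 0` of a left `S`-module `N`. -/
structure FreeResolution : Type 1 where
  ι : ℕ → Type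
  d : ∀ n : ℕ, ((ι (n+1)) →₀ S) →ₗ[S] ((ι n) →₀ S)
  augm : ((ι 0) →₀ S) →ₗ[S] N
  augm_surj : Function.Surjective augm
  exact_augm : Function.Exact (d 0) augm
  exact : ∀ n : ℕ, Function.Exact (d (n+1)) (d n)

variable (M : Type) [AddCommGroup M] [Module Sᵐᵒᵖ M]

/-- `TorVanishes S M N i` asserts that `Tor_i^S(M, N) = 0`, where `M` is a right
`S`-module and `N` is a left `S`-module: for every free resolution `F_• → N`, the
complex `M ⊗_S F_•` has trivial homology in degree `i`. -/
def TorVanishes : ℕ → Prop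
  | 0 => ∀ res : FreeResolution S N, Function.Surjective (RTensor.mapRight S M (res.d 0))
  | (i+1) => ∀ res : FreeResolution S N,
      Function.Exact (RTensor.mapRight S M (res.d (i+1))) (RTensor.mapRight S M (res.d i))

/-- A left `S`-module `N` is flat if `Tor₁^S(M, N) = 0` for every right `S`-module `M`. -/
def IsFlatModule : Prop :=
  ∀ (M : Type) [AddCommGroup M] [Module Sᵐᵒᵖ M], TorVanishes S N M 1

end Resolutions

/-- `Tor_i^S(M, N) = 0` for a right `S`-module `M` and a left `S`-module `N`. -/
def TorIsZero (S : Type) [Ring S] (M : Type) [AddCommGroup M] [Module Sᵐᵒᵖ M]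
    (N : Type) [AddCommGroup N] [Module S N] (i : ℕ) : Prop :=
  TorVanishes S N M i

section GroupRings

variable (R : Type) [Ring R] (G : Type) [Group G]

/-- The augmentation ring homomorphism `R[G] → R`, `∑ r_g g ↦ ∑ r_g`. -/
def augMap : MonoidAlgebra R G →+* R :=
  MonoidAlgebra.liftNCRingHom (RingHom.id R) (1 : G →* R)
    (fun x y => by simp [Commute.one_right])

/-- The augmentation ideal of `R[G]`, as a left ideal. -/
def augIdeal : Ideal (MonoidAlgebra R G) := RingHom.ker (augMap R G)

/-- The augmentation ideal of `R[G]`, as a right `R[G]`-module. -/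
def augIdealRight : Submodule (MonoidAlgebra R G)ᵐᵒᵖ (MonoidAlgebra R G) where
  carrier := {x | augMap R G x = 0}
  add_mem' := by
    intro a b ha hb
    simp only [Set.mem_setOf_eq, map_add] at *
    rw [ha, hb, add_zero]
  zero_mem' := by simp
  smul_mem' := by
    intro c x hx
    simp only [Set.mem_setOf_eq] at *
    have : c • x = x * c.unop := rfl
    rw [this, map_mul, hx, zero_mul]

/-- The trivial left `R[G]`-module structure on `R`. -/
def trivialModule : Module (MonoidAlgebra R G) R := Module.compHom R (augMap R G)

/-- The trivial right `R[G]`-module structure on `R`. -/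
def trivialModuleRight : Module (MonoidAlgebra R G)ᵐᵒᵖ R :=
  Module.compHom R (RingHom.op (augMap R G))

/-- The group `G` is of type `FPₙ(R)`: the trivial `R[G]`-module `R` is of type `FPₙ`. -/
def GroupIsFP (n : ℕ) : Prop :=
  letI := trivialModule R G
  IsFPMod (MonoidAlgebra R G) n R

end GroupRings
section Novikov

variable (R : Type) [Ring R] (G : Type) [Group G]

/-- Left multiplication by elements of `R` on functions `G → R`. -/
def lmulHom : R →+* Module.End ℤ (G → R) where
  toFun r :=
    { toFun := fun a x => r * a x
      map_add' := by intro a b; funext x; simp [mul_add]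
      map_smul' := by
        intro z a; funext x
        simp only [zsmul_eq_mul, Pi.intCast_apply, Pi.mul_apply, eq_intCast, RingHom.id_apply]
        rw [← mul_assoc, ← Int.cast_comm, mul_assoc]
        norm_cast }
  map_one' := by ext a x; simp
  map_mul' := by intro r s; ext a x; simp [mul_assoc]
  map_zero' := by ext a x; simp
  map_add' := by intro r s; ext a x; simp [add_mul]

/-- The (left) translation action of `G` on functions `G → R`. -/
def translationHom : G →* Module.End ℤ (G → R) where
  toFun h :=
    { toFun := fun a x => a (h⁻¹ * x)
      map_add' := by intro a b; funext x; simp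
      map_smul' := by intro z a; funext x; simp }
  map_one' := by ext a x; simp
  map_mul' := by intro g h; ext a x; simp [mul_assoc]

/-- The convolution action of `R[G]` on functions `G → R`, as a ring homomorphism
into additive endomorphisms. -/
def convolutionRho : MonoidAlgebra R G →+* Module.End ℤ (G → R) :=
  MonoidAlgebra.liftNCRingHom (lmulHom R G) (translationHom R G)
    (by
      intro r h
      ext a x
      simp [lmulHom, translationHom])

/-- The left `R[G]`-module structure on all functions `G → R` given by convolution. -/
def functionsModule : Module (MonoidAlgebra R G) (G → R) :=
  Module.compHom (G → R) (convolutionRho R G)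

/-- The defining support condition for the Novikov ring: for any `c`, only finitely many
elements of the support have `χ`-value at most `c`. -/
def NovikovSet (χ : G →* Multiplicative ℤ) : Set (G → R) :=
  {a | ∀ c : ℤ, {g : G | a g ≠ 0 ∧ (χ g).toAdd ≤ c}.Finite}

theorem NovikovSet.add_mem {χ : G →* Multiplicative ℤ} {a b : G → R}
    (ha : a ∈ NovikovSet R G χ) (hb : b ∈ NovikovSet R G χ) :
    a + b ∈ NovikovSet R G χ := by
  intro c
  refine ((ha c).union (hb c)).subset ?_
  rintro g ⟨hne, hle⟩
  by_cases h1 : a g = 0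
  · exact Or.inr ⟨by intro h2; exact hne (by simp [Pi.add_apply, h1, h2]), hle⟩
  · exact Or.inl ⟨h1, hle⟩

theorem NovikovSet.zero_mem (χ : G →* Multiplicative ℤ) : (0 : G → R) ∈ NovikovSet R G χ := by
  intro c
  convert Set.finite_empty using 1
  ext g; simp

theorem NovikovSet.single_smul_mem {χ : G →* Multiplicative ℤ} (h : G) (b : R) {a : G → R}
    (ha : a ∈ NovikovSet R G χ) :
    (fun x => b * a (h⁻¹ * x)) ∈ NovikovSet R G χ := by
  intro c
  refine ((ha (c - (χ h).toAdd)).image (fun g => h * g)).subset ?_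
  rintro g ⟨hne, hle⟩
  refine ⟨h⁻¹ * g, ⟨?_, ?_⟩, by simp⟩
  · intro h0
    apply hne
    show b * a (h⁻¹ * g) = 0
    rw [h0, mul_zero]
  · have hval : (χ (h⁻¹ * g)).toAdd = -(χ h).toAdd + (χ g).toAdd := by
      simp [map_mul]
    rw [hval]
    omega

/-- The Novikov completion `\widehat{R[G]}^χ` of `R[G]` at the character `χ`,
as a left `R[G]`-submodule of the module of all functions `G → R`. -/
def Novikov (χ : G →* Multiplicative ℤ) :
    @Submodule (MonoidAlgebra R G) (G → R) _ _ (functionsModule R G) :=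
  letI := functionsModule R G
  { carrier := NovikovSet R G χ
    add_mem' := by
      intro a b ha hb
      intro c
      refine ((ha c).union (hb c)).subset ?_
      intro g hg
      rcases hg with ⟨hne, hle⟩
      by_cases h1 : a g = 0
      · exact Or.inr ⟨by intro h2; exact hne (by simp [Pi.add_apply, h1, h2]), hle⟩
      · exact Or.inl ⟨h1, hle⟩
    zero_mem' := by
      intro c
      convert Set.finite_empty using 1
      ext g; simp
    smul_mem' := by
      intro c a ha
      show (convolutionRho R G c) a ∈ NovikovSet R G χ
      induction c using MonoidAlgebra.induction with
      | zero => simpa using NovikovSet.zero_mem R G χ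
      | single_add h b f _ _ ih =>
        rw [map_add]
        have hadd : (convolutionRho R G (MonoidAlgebra.single h b)
              + convolutionRho R G f) a
            = (convolutionRho R G (MonoidAlgebra.single h b)) a
              + (convolutionRho R G f) a := rfl
        rw [hadd]
        refine NovikovSet.add_mem R G ?_ ih
        have hsingle : (convolutionRho R G (MonoidAlgebra.single h b)) a
            = fun x => b * a (h⁻¹ * x) := by
          show (MonoidAlgebra.liftNC ((lmulHom R G) : R →+ Module.End ℤ (G → R))
              ⇑(translationHom R G)) (MonoidAlgebra.single h b) a = _
          rw [MonoidAlgebra.liftNC_single]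
          rfl
        rw [hsingle]
        exact NovikovSet.single_smul_mem R G h b ha }

end Novikov

/-- The multiplication pairing `M × (∏_I R) → ∏_I M`, `(m, (r_i)_{i ∈ I}) ↦ (m r_i)_{i ∈ I}`. -/
def multPairing (R : Type) [Ring R] (M : Type) [AddCommGroup M] [Module Rᵐᵒᵖ M]
    (I : Type) : M →+ (I → R) →+ (I → M) where
  toFun m :=
    { toFun := fun a i => op (a i) • m
      map_zero' := by funext i; simp
      map_add' := by intro a b; funext i; simp [add_smul] }
  map_zero' := by ext a i; simp
  map_add' := by intro m m'; ext a i; simp [smul_add]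

theorem multPairing_balanced (R : Type) [Ring R] (M : Type) [AddCommGroup M]
    [Module Rᵐᵒᵖ M] (I : Type) (r : R) (m : M) (a : I → R) :
    multPairing R M I (op r • m) a = multPairing R M I m (r • a) := by
  funext i
  show op (a i) • op r • m = op ((r • a) i) • m
  rw [smul_smul, ← MulOpposite.op_mul]
  rfl

/-!
The multiplication map `M ⊗_R ∏_I R → ∏_I M` is natural in `M` and bijective for `M = R^d`,
where `∑_j e_j ⊗ (b_{i,j})_i` inverts it. A module of type `FP_{n+1}` is finitely presented,
`R^e → R^d → M → 0`, and the two functors turn this presentation into a ladder whose lower row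
`∏_I R^e → ∏_I R^d → ∏_I M → 0` is exact. As the vertical maps on the free terms are bijective,
a diagram chase transfers exactness to the upper row, and the five lemma makes the vertical map
at `M` bijective.
-/

namespace IsFP

variable {S : Type} [Ring S]

theorem finite : ∀ {n : ℕ} {M : ModuleCat.{0} S}, IsFP S n M → Module.Finite S M
  | 0, _, h => h
  | _ + 1, _, ⟨_, φ, hφ, _⟩ => Module.Finite.of_surjective φ hφ

theorem finitePresentation {n : ℕ} {M : ModuleCat.{0} S} (h : IsFP S (n + 1) M) :
    Module.FinitePresentation S M := by
  obtain ⟨_, φ, hφ, hker⟩ := h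
  have := hker.finite
  exact Module.finitePresentation_of_free_of_surjective φ hφ (Module.Finite.iff_fg.mp this)

end IsFP

namespace RTensor

variable {R : Type} [Ring R] {M M' M'' N : Type} [AddCommGroup M] [Module Rᵐᵒᵖ M]
  [AddCommGroup M'] [Module Rᵐᵒᵖ M'] [AddCommGroup M''] [Module Rᵐᵒᵖ M'']
  [AddCommGroup N] [Module R N]

theorem induction_on {P : RTensor R M N → Prop} (x : RTensor R M N) (zero : P 0)
    (tmul : ∀ m n, P (RTensor.tmul R M N m n)) (add : ∀ x y, P x → P y → P (x + y)) : P x := by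
  obtain ⟨y, rfl⟩ := QuotientAddGroup.mk'_surjective (RTensor.rel R M N) x
  induction y using TensorProduct.induction_on with
  | zero => exact zero
  | tmul m n => exact tmul m n
  | add a b ha hb => rw [map_add]; exact add _ _ ha hb

@[ext]
theorem addHom_ext {A : Type} [AddCommGroup A] {F G : RTensor R M N →+ A}
    (h : ∀ m n, F (RTensor.tmul R M N m n) = G (RTensor.tmul R M N m n)) : F = G := by
  ext x
  induction x using induction_on with
  | zero => simp
  | tmul m n => exact h m n
  | add x y hx hy => rw [map_add, map_add, hx, hy]

variable (R M N) in
def tmulHom : M →+ N →+ RTensor R M N where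
  toFun m :=
    { toFun := RTensor.tmul R M N m
      map_zero' := tmul_zero R M N m
      map_add' := tmul_add R M N m }
  map_zero' := by ext n; exact zero_tmul R M N n
  map_add' m m' := by ext n; exact add_tmul R M N m m' n

@[simp]
theorem tmulHom_apply (m : M) (n : N) : tmulHom R M N m n = RTensor.tmul R M N m n := rfl

@[simp]
theorem mapLeft_tmul (g : M →ₗ[Rᵐᵒᵖ] M') (m : M) (n : N) :
    mapLeft R N g (RTensor.tmul R M N m n) = RTensor.tmul R M' N (g m) n :=
  lift_tmul _ _ m n

theorem mapLeft_comp (g : M' →ₗ[Rᵐᵒᵖ] M'') (f : M →ₗ[Rᵐᵒᵖ] M') :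
    mapLeft R N (g ∘ₗ f) = (mapLeft R N g).comp (mapLeft R N f) := by
  ext; simp

theorem mapLeft_zero : mapLeft R N (0 : M →ₗ[Rᵐᵒᵖ] M') = 0 := by
  ext m n
  simpa using zero_tmul R M' N n

theorem mapLeft_surjective {g : M →ₗ[Rᵐᵒᵖ] M'} (hg : Function.Surjective g) :
    Function.Surjective (mapLeft R N g) := by
  intro x
  induction x using induction_on with
  | zero => exact ⟨0, map_zero _⟩
  | tmul m n =>
    obtain ⟨m', rfl⟩ := hg m
    exact ⟨RTensor.tmul R M N m' n, mapLeft_tmul g m' n⟩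
  | add x y hx hy =>
    obtain ⟨x', rfl⟩ := hx
    obtain ⟨y', rfl⟩ := hy
    exact ⟨x' + y', map_add _ _ _⟩

end RTensor

theorem Function.Exact.comp_left {A B C : Type*} [Zero C] {f : A → B} {g : B → C}
    (h : Function.Exact f g) (ι : Type*) :
    Function.Exact (fun x : ι → A => f ∘ x) (fun y : ι → B => g ∘ y) := by
  intro y
  constructor
  · intro hy
    choose x hx using fun i => (h (y i)).1 (congrFun hy i)
    exact ⟨x, funext hx⟩
  · rintro ⟨x, rfl⟩
    funext i
    exact h.apply_apply_eq_zero (x i)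

theorem Function.Exact.of_ladder_of_surjective_of_injective {A₁ A₂ A₃ B₁ B₂ B₃ : Type*}
    [AddCommGroup A₁] [AddCommGroup A₂] [AddCommGroup A₃]
    [AddCommGroup B₁] [AddCommGroup B₂] [AddCommGroup B₃]
    {f : A₁ →+ A₂} {g : A₂ →+ A₃} {f' : B₁ →+ B₂} {g' : B₂ →+ B₃}
    {τ₁ : A₁ →+ B₁} {τ₂ : A₂ →+ B₂} {τ₃ : A₃ →+ B₃}
    (comm₁₂ : f'.comp τ₁ = τ₂.comp f) (comm₂₃ : g'.comp τ₂ = τ₃.comp g)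
    (hfg : g.comp f = 0) (h' : Function.Exact f' g')
    (h₁ : Function.Surjective τ₁) (h₂ : Function.Injective τ₂) : Function.Exact f g := by
  intro x
  constructor
  · intro hx
    obtain ⟨y', hy'⟩ := (h' (τ₂ x)).1 (by simpa [hx] using DFunLike.congr_fun comm₂₃ x)
    obtain ⟨y, rfl⟩ := h₁ y'
    exact ⟨y, h₂ (by simpa [hy'] using (DFunLike.congr_fun comm₁₂ y).symm)⟩
  · rintro ⟨y, rfl⟩
    exact DFunLike.congr_fun hfg y

section MultMap

variable (R : Type) [Ring R] (I : Type)

def multMap (M : Type) [AddCommGroup M] [Module Rᵐᵒᵖ M] : RTensor R M (I → R) →+ (I → M) :=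
  RTensor.lift (multPairing R M I) (multPairing_balanced R M I)

variable {R I}

@[simp]
theorem multMap_tmul {M : Type} [AddCommGroup M] [Module Rᵐᵒᵖ M] (m : M) (a : I → R) :
    multMap R I M (RTensor.tmul R M (I → R) m a) = fun i => op (a i) • m :=
  RTensor.lift_tmul _ _ m a

theorem compLeft_comp_multMap {M M' : Type} [AddCommGroup M] [Module Rᵐᵒᵖ M]
    [AddCommGroup M'] [Module Rᵐᵒᵖ M'] (g : M →ₗ[Rᵐᵒᵖ] M') :
    (g.toAddMonoidHom.compLeft I).comp (multMap R I M) =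
      (multMap R I M').comp (RTensor.mapLeft R (I → R) g) := by
  ext m a
  simp

variable (R I) in
def multMapFreeInv (ι : Type) [Fintype ι] [DecidableEq ι] :
    (I → ι → Rᵐᵒᵖ) →+ RTensor R (ι → Rᵐᵒᵖ) (I → R) :=
  ∑ j : ι, (RTensor.tmulHom R (ι → Rᵐᵒᵖ) (I → R) (Pi.single j 1)).comp
    ((opAddEquiv.symm.toAddMonoidHom.comp (Pi.evalAddMonoidHom (fun _ => Rᵐᵒᵖ) j)).compLeft I)

theorem multMap_free_bijective (ι : Type) [Fintype ι] [DecidableEq ι] :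
    Function.Bijective (multMap R I (ι → Rᵐᵒᵖ)) := by
  refine Function.bijective_iff_has_inverse.2 ⟨multMapFreeInv R I ι, ?_, ?_⟩
  · suffices (multMapFreeInv R I ι).comp (multMap R I (ι → Rᵐᵒᵖ)) = .id _ from
      DFunLike.congr_fun this
    ext m a
    have h (j : ι) :
        RTensor.tmul R (ι → Rᵐᵒᵖ) (I → R) (Pi.single j 1) (fun i => ((op (a i) • m) j).unop) =
          RTensor.tmulHom R (ι → Rᵐᵒᵖ) (I → R) (Pi.single j (m j)) a := by
      rw [show (fun i => ((op (a i) • m) j).unop) = (m j).unop • a from funext fun i => by simp,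
        ← RTensor.tmul_balanced]
      congr 1
      ext k
      simp [Pi.single_apply]
    simp only [multMapFreeInv, AddMonoidHom.coe_comp, comp_apply, multMap_tmul,
      AddMonoidHom.finsetSum_apply]
    refine (Finset.sum_congr rfl fun j _ => h j).trans ?_
    rw [← AddMonoidHom.finsetSum_apply, ← map_sum, Finset.univ_sum_single]
    rfl
  · intro b
    funext i j
    simp [multMapFreeInv, Pi.single_apply]

end MultMap

theorem stmt_1_general (R : Type) [Ring R] (M : Type) [AddCommGroup M] [Module Rᵐᵒᵖ M]
    (n : ℕ) (hM : IsFPMod Rᵐᵒᵖ (n + 1) M) (I : Type) :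
    Function.Bijective (RTensor.lift (multPairing R M I) (multPairing_balanced R M I)) := by
  have : Module.FinitePresentation Rᵐᵒᵖ M := IsFP.finitePresentation hM
  obtain ⟨_, _, φ, ψ, hφ, hψφ⟩ := Module.FinitePresentation.exists_fin' Rᵐᵒᵖ M
  have hprod : Function.Exact (ψ.toAddMonoidHom.compLeft I) (φ.toAddMonoidHom.compLeft I) :=
    hψφ.comp_left I
  have hcomp : (RTensor.mapLeft R (I → R) φ).comp (RTensor.mapLeft R (I → R) ψ) = 0 := by
    rw [← RTensor.mapLeft_comp, hψφ.linearMap_comp_eq_zero, RTensor.mapLeft_zero]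
  have htensor := Function.Exact.of_ladder_of_surjective_of_injective
    (compLeft_comp_multMap ψ) (compLeft_comp_multMap φ) hcomp hprod
    (multMap_free_bijective _).2 (multMap_free_bijective _).1
  exact AddMonoidHom.bijective_of_surjective_of_bijective_of_right_exact _ _ _ _ _ _ (multMap R I M)
    (compLeft_comp_multMap ψ) (compLeft_comp_multMap φ) htensor hprod
    (multMap_free_bijective _).2 (multMap_free_bijective _)
    (RTensor.mapLeft_surjective hφ) hφ.comp_left

/-- If `M` is a right `R`-module of type `FP_{n+1}` with `n ≥ 1`, then the
multiplication map `M ⊗_R ∏_I R → ∏_I M`, `m ⊗ (r_i) ↦ (m r_i)`, is an isomorphism of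
abelian groups, for any index set `I`. -/
theorem stmt_1 (R : Type) [Ring R] (M : Type) [AddCommGroup M] [Module Rᵐᵒᵖ M]
    (n : ℕ) (hn : 1 ≤ n) (hM : IsFPMod Rᵐᵒᵖ (n + 1) M) (I : Type) :
    Function.Bijective (RTensor.lift (multPairing R M I) (multPairing_balanced R M I)) :=
  stmt_1_general R M n hM I
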